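/- The conditional diameter of the tree T^{s+1}_n (path x_1...x_{n-1} with a pendant vertex attached to x_{s+1}) satisfies D(T^{s+1}_n; s) = n - 2s, provided n \ge 2s + 3. -/

import Mathlib

open SimpleGraph Finset

/-- Wiener index: sum of distances over unordered pairs. -/
noncomputable def wiener {V : Type*} [Fintype V] (G : SimpleGraph V) : ℕ :=
  (∑ u : V, ∑ v : V, G.dist u v) / 2

/-- Sum of distances from a vertex. -/
noncomputable def distSum {V : Type*} [Fintype V] (G : SimpleGraph V) (u : V) : ℕ :=
  ∑ v : V, G.dist u v

/-- Distance between two vertex subsets. -/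
noncomputable def setDist {V : Type*} (G : SimpleGraph V) (A B : Finset V) : ℕ :=
  sInf {d | ∃ x ∈ A, ∃ y ∈ B, G.dist x y = d}

/-- Conditional diameter `D(G; s)`. -/
noncomputable def condDiam {V : Type*} (G : SimpleGraph V) (s : ℕ) : ℕ :=
  sSup {d | ∃ A B : Finset V, A.card = s ∧ B.card = s ∧ setDist G A B = d}

/-- `T^i_n` (1-based `i`): path `x_1 … x_{n-1}` (vertices `0,…,n-2`) with a pendant
vertex (vertex `n-1`) attached to `x_i` (vertex `i-1`). -/
def Tpend (n i : ℕ) : SimpleGraph (Fin n) :=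
  SimpleGraph.fromRel (fun u v =>
    (u.val + 1 = v.val ∧ v.val ≤ n - 2) ∨ (u.val = i - 1 ∧ v.val = n - 1))

/-- `T^{i,j}_n` (1-based): path `x_1 … x_{n-2}` (vertices `0,…,n-3`) with pendant
vertices `n-2` attached to `x_i` and `n-1` attached to `x_j`. -/
def Tpend2 (n i j : ℕ) : SimpleGraph (Fin n) :=
  SimpleGraph.fromRel (fun u v =>
    (u.val + 1 = v.val ∧ v.val ≤ n - 3) ∨ (u.val = i - 1 ∧ v.val = n - 2) ∨
      (u.val = j - 1 ∧ v.val = n - 1))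

/-- `T^{i(2)}_n` (1-based): path `x_1 … x_{n-2}` with a pendant path `x_i - w_1 - w_2`
(`w_1 = n-2`, `w_2 = n-1`). -/
def TpendPath2 (n i : ℕ) : SimpleGraph (Fin n) :=
  SimpleGraph.fromRel (fun u v =>
    (u.val + 1 = v.val ∧ v.val ≤ n - 3) ∨ (u.val = i - 1 ∧ v.val = n - 2) ∨
      (u.val = n - 2 ∧ v.val = n - 1))

/-!
Send the pendant vertex to its neighbour `x_{s+1}`: this projects the tree onto the path
`x_1 … x_{n-1}` without increasing distances, and is isometric on the path itself. If all
distances between two `s`-sets `A` and `B` exceeded `n - 2s`, their positions on the path would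
be separated; a closest cross pair bounds a gap free of both sets, and counting sets and gap on
the `n - 1` path vertices leaves room only for `n - 2s + 1`. This disposes of the case where
neither set contains the pendant vertex. If `A` does, replace it by `x_{s+1}`: the count can then
only be tight if the position set of `A`, which contains `x_{s+1}` and has at most `s` elements,
is an end segment of the path, impossible for `n ≥ 2s + 3`. The first and the last `s` path
vertices are at distance exactly `n - 2s`.
-/

section SetDist

variable {V : Type*} {G : SimpleGraph V} {A B : Finset V}

lemma setDist_le {x y : V} (hx : x ∈ A) (hy : y ∈ B) : setDist G A B ≤ G.dist x y :=
  Nat.sInf_le ⟨x, hx, y, hy, rfl⟩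

lemma le_setDist {d : ℕ} (hA : A.Nonempty) (hB : B.Nonempty)
    (h : ∀ x ∈ A, ∀ y ∈ B, d ≤ G.dist x y) : d ≤ setDist G A B := by
  obtain ⟨x, hx⟩ := hA
  obtain ⟨y, hy⟩ := hB
  exact le_csInf ⟨_, x, hx, y, hy, rfl⟩ fun _ ⟨x, hx, y, hy, hxy⟩ => hxy ▸ h x hx y hy

lemma condDiam_eq_of_forall_le {s d : ℕ}
    (hmem : ∃ A B : Finset V, #A = s ∧ #B = s ∧ setDist G A B = d)
    (hle : ∀ A B : Finset V, #A = s → #B = s → setDist G A B ≤ d) : condDiam G s = d :=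
  IsGreatest.csSup_eq ⟨hmem, fun _ ⟨A, B, hA, hB, hAB⟩ => hAB ▸ hle A B hA hB⟩

end SetDist

section PathSeparation

variable {X Y : Finset ℕ} {e N : ℕ}

lemma disjoint_of_separated (he : 1 ≤ e) (hsep : ∀ x ∈ X, ∀ y ∈ Y, x + e ≤ y ∨ y + e ≤ x) :
    Disjoint X Y :=
  disjoint_left.2 fun x hx hy => by have := hsep x hx x hy; omega

lemma exists_gap_of_separated (hX : X.Nonempty) (hY : Y.Nonempty)
    (hsep : ∀ x ∈ X, ∀ y ∈ Y, x + e ≤ y ∨ y + e ≤ x) :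
    ∃ l ∈ X ∪ Y, ∃ r ∈ X ∪ Y, l + e ≤ r ∧ Disjoint (X ∪ Y) (Ioo l r) := by
  obtain ⟨⟨a, b⟩, hab, hmin⟩ :=
    (X ×ˢ Y).exists_min_image (fun p => p.1 - p.2 + (p.2 - p.1)) (hX.product hY)
  rw [mem_product] at hab
  -- by minimality, no point of `X ∪ Y` lies strictly between `a` and `b`
  have hfree : ∀ t ∈ X ∪ Y, t ≤ min a b ∨ max a b ≤ t := by
    intro t ht
    rcases mem_union.1 ht with htX | htY
    · have := hmin (t, b) (mem_product.2 ⟨htX, hab.2⟩); dsimp only at this; omega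
    · have := hmin (a, t) (mem_product.2 ⟨hab.1, htY⟩); dsimp only at this; omega
  have hmem : ∀ c, c = a ∨ c = b → c ∈ X ∪ Y := by
    rintro c (rfl | rfl)
    exacts [mem_union_left _ hab.1, mem_union_right _ hab.2]
  refine ⟨min a b, hmem _ (min_choice a b), max a b, hmem _ (max_choice a b), ?_, ?_⟩
  · have := hsep a hab.1 b hab.2; omega
  · exact disjoint_left.2 fun t ht htI => by have := hfree t ht; rw [mem_Ioo] at htI; omega

lemma card_add_card_add_le (hXY : X ∪ Y ⊆ range N) (hX : X.Nonempty) (hY : Y.Nonempty)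
    (he : 1 ≤ e) (hsep : ∀ x ∈ X, ∀ y ∈ Y, x + e ≤ y ∨ y + e ≤ x) :
    #X + #Y + e ≤ N + 1 := by
  obtain ⟨l, hl, r, hr, hlr, hgap⟩ := exists_gap_of_separated hX hY hsep
  have hsub : X ∪ Y ∪ Ioo l r ⊆ range N :=
    union_subset hXY fun t ht => by
      have := mem_range.1 (hXY hr); rw [mem_Ioo] at ht; exact mem_range.2 (by omega)
  have := card_le_card hsub
  rw [card_union_of_disjoint hgap, card_union_of_disjoint (disjoint_of_separated he hsep),
    Nat.card_Ioo, card_range] at this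
  omega

lemma Icc_subset_of_succ_mem {S : Finset ℕ} {i j : ℕ} (hi : i ∈ S)
    (h : ∀ k, i ≤ k → k < j → k ∈ S → k + 1 ∈ S) : Icc i j ⊆ S := by
  intro m hm
  rw [mem_Icc] at hm
  induction m, hm.1 using Nat.le_induction with
  | base => exact hi
  | succ m hm' ih => exact h m hm' (by omega) (ih ⟨hm', by omega⟩)

lemma Icc_subset_of_pred_mem {S : Finset ℕ} {i j : ℕ} (hj : j ∈ S)
    (h : ∀ k, i ≤ k → k < j → k + 1 ∈ S → k ∈ S) : Icc i j ⊆ S := by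
  intro m hm
  rw [mem_Icc] at hm
  induction hm.2 using Nat.decreasingInduction with
  | self => exact hj
  | of_succ k hk ih => exact h k (by omega) hk (ih ⟨by omega, hk⟩)

lemma card_add_card_add_le_of_mem (hXY : X ∪ Y ⊆ range N) (hY : Y.Nonempty) (he : 2 ≤ e)
    (hsep : ∀ x ∈ X, ∀ y ∈ Y, x + e ≤ y ∨ y + e ≤ x) {s₀ : ℕ} (hs₀ : s₀ ∈ X)
    (hleft : #X ≤ s₀) (hright : #X + s₀ < N) :
    #X + #Y + e ≤ N := by
  by_contra! hcount
  obtain ⟨l, hl, r, hr, hlr, hgap⟩ := exists_gap_of_separated ⟨s₀, hs₀⟩ hY hsep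
  have hsub : X ∪ Y ∪ Ioo l r ⊆ range N :=
    union_subset hXY fun t ht => by
      have := mem_range.1 (hXY hr); rw [mem_Ioo] at ht; exact mem_range.2 (by omega)
  -- the count of `card_add_card_add_le` is tight, so `X`, `Y` and the gap cover the whole path
  have hcover : X ∪ Y ∪ Ioo l r = range N := by
    refine eq_of_subset_of_card_le hsub ?_
    rw [card_union_of_disjoint hgap, card_union_of_disjoint (disjoint_of_separated (by omega) hsep),
      Nat.card_Ioo, card_range]
    omega
  have hstep : ∀ j < N, j ∉ Ioo l r → ∀ x ∈ X, j ≤ x + 1 → x ≤ j + 1 → j ∈ X := by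
    intro j hjN hjI x hx hjx hxj
    have hj : j ∈ X ∪ Y ∪ Ioo l r := hcover ▸ mem_range.2 hjN
    rcases mem_union.1 hj with hj | hj
    · refine (mem_union.1 hj).resolve_right fun hjY => ?_
      have := hsep x hx j hjY
      omega
    · exact absurd hj hjI
  have hs₀gap : s₀ ∉ Ioo l r := disjoint_left.1 hgap (mem_union_left _ hs₀)
  rw [mem_Ioo, not_and_or, not_lt, not_lt] at hs₀gap
  rcases hs₀gap with hs₀l | hrs₀
  · have hfill : Icc 0 s₀ ⊆ X := Icc_subset_of_pred_mem hs₀ fun k _ hk hk1 =>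
      hstep k (by have := mem_range.1 (hXY (mem_union_left _ hs₀)); omega) (by rw [mem_Ioo]; omega)
        _ hk1 (by omega) (by omega)
    have := card_le_card hfill
    rw [Nat.card_Icc] at this
    omega
  · have hfill : Icc s₀ (N - 1) ⊆ X := Icc_subset_of_succ_mem hs₀ fun k _ hk hk0 =>
      hstep (k + 1) (by omega) (by rw [mem_Ioo]; omega) _ hk0 (by omega) (by omega)
    have := card_le_card hfill
    rw [Nat.card_Icc] at this
    omega

end PathSeparation

section Tpend

variable {n s : ℕ}

lemma tpend_adj_of_succ_eq {u v : Fin n} (h : (u : ℕ) + 1 = v) (hv : (v : ℕ) < n - 1) :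
    (Tpend n (s + 1)).Adj u v := by
  rw [Tpend, fromRel_adj]
  exact ⟨fun huv => by rw [huv] at h; omega, Or.inl (Or.inl ⟨h, by omega⟩)⟩

lemma tpend_adj_pendant (hs : s < n - 1) {u v : Fin n} (hu : (u : ℕ) = s) (hv : (v : ℕ) = n - 1) :
    (Tpend n (s + 1)).Adj u v := by
  rw [Tpend, fromRel_adj]
  exact ⟨fun huv => by rw [huv] at hu; omega, Or.inl (Or.inr ⟨by omega, hv⟩)⟩

lemma tpend_exists_walk_length_eq {u v : Fin n} (huv : (u : ℕ) ≤ v) (hv : (v : ℕ) < n - 1) :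
    ∃ w : (Tpend n (s + 1)).Walk u v, w.length = v - u := by
  obtain ⟨k, hk⟩ := Nat.exists_eq_add_of_le huv
  induction k generalizing u with
  | zero => obtain rfl : u = v := Fin.ext (by omega); exact ⟨.nil, by simp⟩
  | succ k ih =>
    obtain ⟨w, hw⟩ := ih (u := ⟨u + 1, by omega⟩) (by dsimp only; omega) (by dsimp only; omega)
    exact ⟨.cons (tpend_adj_of_succ_eq rfl (by dsimp only; omega)) w,
      by rw [Walk.length_cons, hw]; dsimp only; omega⟩

lemma tpend_reachable {u v : Fin n} (hu : (u : ℕ) < n - 1) (hv : (v : ℕ) < n - 1) :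
    (Tpend n (s + 1)).Reachable u v := by
  rcases le_total (u : ℕ) v with huv | hvu
  · exact (tpend_exists_walk_length_eq huv hv).elim fun w _ => w.reachable
  · exact (tpend_exists_walk_length_eq hvu hu).elim fun w _ => w.reachable.symm

def tpendProj (n s : ℕ) (v : Fin n) : ℕ := if (v : ℕ) = n - 1 then s else v

lemma tpendProj_of_lt {v : Fin n} (hv : (v : ℕ) < n - 1) : tpendProj n s v = v :=
  if_neg hv.ne

lemma tpendProj_le_of_adj {u v : Fin n} (h : (Tpend n (s + 1)).Adj u v) :
    tpendProj n s u ≤ tpendProj n s v + 1 := by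
  rw [Tpend, fromRel_adj] at h
  unfold tpendProj
  rcases h.2 with (⟨h1, h2⟩ | ⟨h1, h2⟩) | (⟨h1, h2⟩ | ⟨h1, h2⟩) <;> split_ifs <;> omega

lemma tpendProj_le_add_length {u v : Fin n} (w : (Tpend n (s + 1)).Walk u v) :
    tpendProj n s u ≤ tpendProj n s v + w.length := by
  induction w with
  | nil => simp
  | cons h _ ih => rw [Walk.length_cons]; have := tpendProj_le_of_adj h; omega

lemma tpend_dist_eq {u v : Fin n} (hu : (u : ℕ) < n - 1) (hv : (v : ℕ) < n - 1) :
    (Tpend n (s + 1)).dist u v = u - v + (v - u) := by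
  obtain ⟨w, hw⟩ := (tpend_reachable (s := s) hu hv).exists_walk_length_eq_dist
  have h₁ := tpendProj_le_add_length w
  have h₂ := tpendProj_le_add_length w.reverse
  rw [Walk.length_reverse, hw, tpendProj_of_lt hu, tpendProj_of_lt hv] at *
  refine le_antisymm ?_ (by omega)
  rcases le_total (u : ℕ) v with huv | hvu
  · obtain ⟨w', hw'⟩ := tpend_exists_walk_length_eq (s := s) huv hv
    exact (dist_le w').trans (by omega)
  · obtain ⟨w', hw'⟩ := tpend_exists_walk_length_eq (s := s) hvu hu
    exact (dist_le w'.reverse).trans (by rw [Walk.length_reverse]; omega)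

lemma tpend_dist_pendant_le (hs : s < n - 1) {u v : Fin n} (hu : (u : ℕ) < n - 1)
    (hv : (v : ℕ) = n - 1) :
    (Tpend n (s + 1)).dist u v ≤ u - s + (s - u) + 1 := by
  let x : Fin n := ⟨s, by omega⟩
  obtain ⟨w, hw⟩ := (tpend_reachable (s := s) hu (v := x) hs).exists_walk_length_eq_dist
  have := dist_le (w.concat (tpend_adj_pendant hs rfl hv))
  rwa [Walk.length_concat, hw, tpend_dist_eq hu (v := x) hs] at this

/-- Positions of `A` on the path `x_1 … x_{n-1}`, counted from `0`; the pendant vertex is dropped. -/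
def pathPos (n : ℕ) (A : Finset (Fin n)) : Finset ℕ := (A.image Fin.val).erase (n - 1)

lemma exists_of_mem_pathPos {A : Finset (Fin n)} {x : ℕ} (hx : x ∈ pathPos n A) :
    ∃ a ∈ A, (a : ℕ) = x ∧ x < n - 1 := by
  obtain ⟨hx, hxA⟩ := mem_erase.1 hx
  obtain ⟨a, ha, rfl⟩ := mem_image.1 hxA
  exact ⟨a, ha, rfl, by omega⟩

lemma pathPos_subset_range (A : Finset (Fin n)) : pathPos n A ⊆ range (n - 1) := fun _ hx =>
  have ⟨_, _, _, hx⟩ := exists_of_mem_pathPos hx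
  mem_range.2 hx

lemma card_pathPos_of_notMem {A : Finset (Fin n)} (h : n - 1 ∉ A.image Fin.val) :
    #(pathPos n A) = #A := by
  rw [pathPos, erase_eq_of_notMem h, card_image_of_injective _ Fin.val_injective]

lemma card_pathPos_of_mem {A : Finset (Fin n)} (h : n - 1 ∈ A.image Fin.val) :
    #(pathPos n A) = #A - 1 := by
  rw [pathPos, card_erase_of_mem h, card_image_of_injective _ Fin.val_injective]

lemma tpend_pathPos_separated {d : ℕ} {A B : Finset (Fin n)}
    (hfar : ∀ a ∈ A, ∀ b ∈ B, d < (Tpend n (s + 1)).dist a b) :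
    ∀ x ∈ pathPos n A, ∀ y ∈ pathPos n B, x + (d + 1) ≤ y ∨ y + (d + 1) ≤ x := by
  intro x hx y hy
  obtain ⟨a, ha, rfl, hx⟩ := exists_of_mem_pathPos hx
  obtain ⟨b, hb, rfl, hy⟩ := exists_of_mem_pathPos hy
  have := hfar a ha b hb
  rw [tpend_dist_eq hx hy] at this
  omega

lemma tpend_pendant_separated (hs : s < n - 1) {d : ℕ} {p : Fin n} (hp : (p : ℕ) = n - 1)
    {B : Finset (Fin n)} (hfar : ∀ b ∈ B, d < (Tpend n (s + 1)).dist p b) :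
    ∀ y ∈ pathPos n B, s + d ≤ y ∨ y + d ≤ s := by
  intro y hy
  obtain ⟨b, hb, rfl, hy⟩ := exists_of_mem_pathPos hy
  have := hfar b hb
  rw [dist_comm] at this
  have := tpend_dist_pendant_le hs hy hp
  omega

lemma tpend_exists_dist_le (hs : 1 ≤ s) (hn : 2 * s + 3 ≤ n) {A B : Finset (Fin n)}
    (hA : #A = s) (hB : #B = s) (hpB : n - 1 ∉ B.image Fin.val) :
    ∃ a ∈ A, ∃ b ∈ B, (Tpend n (s + 1)).dist a b ≤ n - 2 * s := by
  by_contra! hfar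
  have hXY := union_subset (pathPos_subset_range A) (pathPos_subset_range B)
  have hsep := tpend_pathPos_separated hfar
  have hY := card_pathPos_of_notMem hpB
  have hYne : (pathPos n B).Nonempty := card_pos.1 (by omega)
  by_cases hpA : n - 1 ∈ A.image Fin.val
  · have hX := card_pathPos_of_mem hpA
    obtain ⟨p, hpA, hp⟩ := mem_image.1 hpA
    have hsepP := tpend_pendant_separated (by omega) hp (hfar p hpA)
    by_cases hsX : s ∈ pathPos n A
    · have := card_add_card_add_le_of_mem hXY hYne (by omega) hsep hsX (by omega) (by omega)
      omega
    · have hsX' : #(insert s (pathPos n A)) = s := by rw [card_insert_of_notMem hsX]; omega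
      -- the pendant vertex is replaced by its neighbour `s`, one step closer to `B`
      have hXY' : insert s (pathPos n A) ∪ pathPos n B ⊆ range (n - 1) := by
        rw [insert_union]
        exact insert_subset (mem_range.2 (by omega)) hXY
      have := card_add_card_add_le_of_mem hXY' hYne (e := n - 2 * s) (by omega) (by
          intro x hx y hy
          rcases mem_insert.1 hx with rfl | hx
          exacts [hsepP y hy, (hsep x hx y hy).imp (by omega) (by omega)])
        (mem_insert_self s _) (by omega) (by omega)
      omega
  · have hX := card_pathPos_of_notMem hpA
    have := card_add_card_add_le hXY (card_pos.1 (by omega)) hYne le_add_self hsep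
    omega

lemma tpend_setDist_le (hs : 1 ≤ s) (hn : 2 * s + 3 ≤ n) {A B : Finset (Fin n)}
    (hA : #A = s) (hB : #B = s) : setDist (Tpend n (s + 1)) A B ≤ n - 2 * s := by
  by_cases hpB : n - 1 ∈ B.image Fin.val
  · by_cases hpA : n - 1 ∈ A.image Fin.val
    · obtain ⟨a, ha, ha'⟩ := mem_image.1 hpA
      obtain ⟨b, hb, hb'⟩ := mem_image.1 hpB
      obtain rfl : a = b := Fin.ext (ha'.trans hb'.symm)
      exact (setDist_le ha hb).trans (by rw [dist_self]; exact Nat.zero_le _)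
    · obtain ⟨b, hb, a, ha, h⟩ := tpend_exists_dist_le hs hn hB hA hpA
      exact (setDist_le ha hb).trans (dist_comm ▸ h)
  · obtain ⟨a, ha, b, hb, h⟩ := tpend_exists_dist_le hs hn hA hB hpB
    exact (setDist_le ha hb).trans h

lemma tpend_exists_setDist_eq (hs : 1 ≤ s) (hn : 2 * s + 3 ≤ n) :
    ∃ A B : Finset (Fin n), #A = s ∧ #B = s ∧ setDist (Tpend n (s + 1)) A B = n - 2 * s := by
  have hmemA : (⟨s - 1, by omega⟩ : Fin n) ∈ Iio ⟨s, by omega⟩ := by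
    rw [mem_Iio, Fin.lt_def]; dsimp only; omega
  have hmemB : (⟨n - 1 - s, by omega⟩ : Fin n) ∈ Ico ⟨n - 1 - s, by omega⟩ ⟨n - 1, by omega⟩ := by
    rw [mem_Ico, Fin.lt_def]; dsimp only; omega
  refine ⟨Iio ⟨s, by omega⟩, Ico ⟨n - 1 - s, by omega⟩ ⟨n - 1, by omega⟩, Fin.card_Iio _,
    by rw [Fin.card_Ico]; dsimp only; omega, le_antisymm ?_ ?_⟩
  · refine (setDist_le hmemA hmemB).trans_eq ?_
    rw [tpend_dist_eq] <;> dsimp only <;> omega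
  · refine le_setDist ⟨_, hmemA⟩ ⟨_, hmemB⟩ fun x hx y hy => ?_
    rw [mem_Iio, Fin.lt_def] at hx
    rw [mem_Ico, Fin.le_def, Fin.lt_def] at hy
    dsimp only at hx hy
    rw [tpend_dist_eq] <;> omega

end Tpend

theorem stmt11 (n s : ℕ) (hs : 1 ≤ s) (hn : 2 * s + 3 ≤ n) :
    condDiam (Tpend n (s + 1)) s = n - 2 * s :=
  condDiam_eq_of_forall_le (tpend_exists_setDist_eq hs hn) fun _ _ hA hB =>
    tpend_setDist_le hs hn hA hB
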